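/- Define the sequence H by H₀ = φ + 1, H₁ = 2, and, writing Hₙ = aₙφ + bₙ, by the recursion (a,b),(c,d) ↦ (a+c+d, b+c), i.e. aₙ₊₁ = aₙ₋₁ + aₙ + bₙ and bₙ₊₁ = bₙ₋₁ + aₙ (with a₀=1, b₀=1, a₁=0, b₁=2). Then Hₙ₊₁/Hₙ → χ' as n → ∞, where χ' = (1+√5+√(22+2√5))/4. -/
import Mathlib

noncomputable def φ : ℝ := (1 + Real.sqrt 5) / 2

noncomputable def ab : ℕ → ℝ × ℝ
  | 0 => (1, 1)
  | 1 => (0, 2)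
  | (n + 2) => ((ab n).1 + (ab (n+1)).1 + (ab (n+1)).2, (ab n).2 + (ab (n+1)).1)

noncomputable def H (n : ℕ) : ℝ := (ab n).1 * φ + (ab n).2

noncomputable def Sq : ℝ := Real.sqrt (φ^2 + 4)
noncomputable def χ : ℝ := (φ + Sq)/2
noncomputable def ψ : ℝ := (φ - Sq)/2
noncomputable def Ac : ℝ := (2 - ψ*(φ+1))/Sq
noncomputable def Bc : ℝ := (χ*(φ+1) - 2)/Sq

lemma h5 : Real.sqrt 5 ^ 2 = 5 := Real.sq_sqrt (by norm_num)
lemma h5ge : (2:ℝ) ≤ Real.sqrt 5 := by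
  nlinarith [h5, Real.sqrt_nonneg 5]
lemma hφ2 : φ^2 = φ + 1 := by
  unfold φ; nlinarith [h5]
lemma hφ1 : (1:ℝ) < φ := by
  unfold φ; nlinarith [h5ge]
lemma hS2 : Sq^2 = φ^2 + 4 := Real.sq_sqrt (by positivity)
lemma hSpos : 0 < Sq := Real.sqrt_pos.mpr (by positivity)
lemma hSgt : φ < Sq := by nlinarith [hS2, hSpos, hφ1]
lemma hχ1 : 1 < χ := by unfold χ; nlinarith [hS2, hSpos, hφ1]
lemma hψneg : ψ < 0 := by unfold ψ; nlinarith [hSgt]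
lemma hχψ : χ * ψ = -1 := by unfold χ ψ; nlinarith [hS2]
lemma hψgt : -1 < ψ := by nlinarith [hχψ, hχ1]
lemma hχ2 : χ^2 = φ*χ + 1 := by unfold χ; nlinarith [hS2]
lemma hψ2 : ψ^2 = φ*ψ + 1 := by unfold ψ; nlinarith [hS2]
lemma hSdiff : χ - ψ = Sq := by unfold χ ψ; ring
lemma hApos : 0 < Ac := by
  unfold Ac
  apply div_pos _ hSpos
  nlinarith [hψneg, hφ1]

lemma Hrec (n : ℕ) : H (n+2) = φ * H (n+1) + H n := by
  simp only [H, ab]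
  linear_combination (-(ab (n+1)).1) * hφ2

lemma Hform : ∀ n, H n = Ac*χ^n + Bc*ψ^n := by
  have key : ∀ n, H n = Ac*χ^n + Bc*ψ^n ∧ H (n+1) = Ac*χ^(n+1) + Bc*ψ^(n+1) := by
    intro n
    induction n with
    | zero =>
      have hS : Sq ≠ 0 := ne_of_gt hSpos
      constructor
      · show H 0 = Ac*χ^0 + Bc*ψ^0
        have : H 0 = φ + 1 := by simp [H, ab]
        rw [this, pow_zero, pow_zero]
        unfold Ac Bc
        field_simp
        linear_combination (-(φ+1))*hSdiff
      · show H 1 = Ac*χ^1 + Bc*ψ^1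
        have : H 1 = 2 := by simp [H, ab]
        rw [this, pow_one, pow_one]
        unfold Ac Bc
        field_simp
        linear_combination (-2)*hSdiff
    | succ k ih =>
      refine ⟨ih.2, ?_⟩
      rw [Hrec k, ih.1, ih.2]
      linear_combination (-(Ac*χ^k)) * hχ2 + (-(Bc*ψ^k)) * hψ2
  exact fun n => (key n).1

lemma ab_nonneg : ∀ n, 0 ≤ (ab n).1 ∧ 1 ≤ (ab n).2 := by
  have key : ∀ n, (0 ≤ (ab n).1 ∧ 1 ≤ (ab n).2) ∧ (0 ≤ (ab (n+1)).1 ∧ 1 ≤ (ab (n+1)).2) := by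
    intro n
    induction n with
    | zero => simp [ab]
    | succ k ih =>
      refine ⟨ih.2, ?_⟩
      show 0 ≤ ((ab k).1 + (ab (k+1)).1 + (ab (k+1)).2) ∧ 1 ≤ ((ab k).2 + (ab (k+1)).1)
      obtain ⟨⟨h1, h2⟩, h3, h4⟩ := ih
      constructor <;> linarith
  exact fun n => (key n).1

lemma H_pos (n : ℕ) : 0 < H n := by
  obtain ⟨h1, h2⟩ := ab_nonneg n
  have := hφ1
  unfold H
  nlinarith

theorem stmt18 :
    Filter.Tendsto (fun n => H (n + 1) / H n) Filter.atTop
      (nhds ((1 + Real.sqrt 5 + Real.sqrt (22 + 2 * Real.sqrt 5)) / 4)) := by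
  have hχpos : (0:ℝ) < χ := lt_trans one_pos hχ1
  set r : ℝ := ψ/χ with hr_def
  have habs : |r| < 1 := by
    rw [hr_def, abs_div, abs_of_neg hψneg, abs_of_pos hχpos, div_lt_one hχpos]
    linarith [hψgt, hχ1]
  have key : ∀ n : ℕ, H (n+1) / H n = (Ac*χ + Bc*ψ*r^n)/(Ac + Bc*r^n) := by
    intro n
    have hχn : (χ:ℝ)^n ≠ 0 := pow_ne_zero _ (ne_of_gt hχpos)
    have e1 : Ac + Bc*r^n = H n / χ^n := by
      rw [Hform n, hr_def, div_pow]
      field_simp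
    have e2 : Ac*χ + Bc*ψ*r^n = H (n+1) / χ^n := by
      rw [Hform (n+1), hr_def, div_pow]
      field_simp
      ring
    rw [e1, e2, div_div_div_comm, div_self hχn, div_one]
  have hr0 : Filter.Tendsto (fun n : ℕ => r^n) Filter.atTop (nhds 0) :=
    tendsto_pow_atTop_nhds_zero_of_abs_lt_one habs
  have hnum : Filter.Tendsto (fun n : ℕ => Ac*χ + Bc*ψ*r^n) Filter.atTop (nhds (Ac*χ)) := by
    have := (hr0.const_mul (Bc*ψ)).const_add (Ac*χ)
    simpa using this
  have hden : Filter.Tendsto (fun n : ℕ => Ac + Bc*r^n) Filter.atTop (nhds Ac) := by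
    have := (hr0.const_mul Bc).const_add Ac
    simpa using this
  have hdiv := hnum.div hden (ne_of_gt hApos)
  have hlim : Ac*χ/Ac = χ := by
    rw [div_eq_iff (ne_of_gt hApos)]; ring
  have hχval : χ = (1 + Real.sqrt 5 + Real.sqrt (22 + 2 * Real.sqrt 5)) / 4 := by
    have h22 : Real.sqrt (22 + 2 * Real.sqrt 5) = 2 * Sq := by
      have hφval : φ = (1 + Real.sqrt 5)/2 := rfl
      rw [show (22 + 2 * Real.sqrt 5 : ℝ) = (2*Sq)^2 by linear_combination (-4)*hS2 + (-4)*hφ2 + (-4)*hφval]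
      exact Real.sqrt_sq (by linarith [hSpos])
    rw [h22]
    unfold χ φ
    ring
  rw [← hχval, ← hlim]
  exact hdiv.congr (fun n => (key n).symm)
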